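/- With α = √(1−ε), β = √(ε/3), α > β > 0: the inequality 2β(α+β) < (α+β)(α−β), i.e., the trace distance d(R_0R_0*, R_1R_1*) being strictly less than d(S_0S_0*, S_1S_1*) for the depolarizing-channel purification, holds if and only if ε < 1/4. Consequently, for ε < 1/4 there exists no TPCP map F with F(R_uR_v*) = S_uS_v* for all u,v ∈ {0,1}. -/

import Mathlib

/-!
The input difference `X = R₀R₀ᴴ - R₁R₁ᴴ` splits as `AᴴA - BᴴB` with
`tr AᴴA = tr BᴴB = 2β(α + β)`, while the output difference `Y = S₀S₀ᴴ - S₁S₁ᴴ` has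
`Y₀₀ - Y₁₁ = 2(α² - β²)`. A trace-preserving completely positive map sends `AᴴA` and `BᴴB` to
positive matrices with the same traces, and on a positive matrix `P` the functional
`P ↦ P₀₀ - P₁₁` is bounded by `tr P`. So a channel with `X ↦ Y` forces
`(α + β)(α - β) ≤ 2β(α + β)`, i.e. `α ≤ 3β`, i.e. `ε ≥ 1/4`: this is the contractivity
`‖Y‖₁ ≤ ‖X‖₁` of the trace norm, tested against `diag(1, -1)`.
-/

open Matrix

/-- The trace norm of a (rectangular) complex matrix: the sum of its singular values. -/
noncomputable def traceNorm {m n : ℕ} (A : Matrix (Fin m) (Fin n) ℂ) : ℝ :=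
  ∑ i, Real.sqrt ((Matrix.isHermitian_conjTranspose_mul_self A).eigenvalues i)

open scoped ComplexOrder

section Kraus

variable {ι m n : Type*} [Fintype ι] [Fintype n]

def krausMap (F : ι → Matrix m n ℂ) (X : Matrix n n ℂ) : Matrix m m ℂ :=
  ∑ ℓ, F ℓ * X * (F ℓ)ᴴ

theorem krausMap_sub (F : ι → Matrix m n ℂ) (X Y : Matrix n n ℂ) :
    krausMap F (X - Y) = krausMap F X - krausMap F Y := by
  simp only [krausMap, Matrix.mul_sub, Matrix.sub_mul, Finset.sum_sub_distrib]

theorem trace_krausMap [Fintype m] [DecidableEq n] {F : ι → Matrix m n ℂ}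
    (hF : ∑ ℓ, (F ℓ)ᴴ * F ℓ = 1) (X : Matrix n n ℂ) : (krausMap F X).trace = X.trace := by
  simp_rw [krausMap, trace_sum, trace_mul_cycle (F _), ← trace_sum, ← Finset.sum_mul, hF,
    one_mul]

theorem Matrix.PosSemidef.krausMap [Fintype m] {X : Matrix n n ℂ} (hX : X.PosSemidef)
    (F : ι → Matrix m n ℂ) : (krausMap F X).PosSemidef :=
  posSemidef_sum _ fun ℓ _ => hX.mul_mul_conjTranspose_same (F ℓ)

theorem Matrix.PosSemidef.apply_le_trace [Fintype m] {P : Matrix m m ℂ} (hP : P.PosSemidef)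
    (i : m) : P i i ≤ P.trace :=
  Finset.single_le_sum (f := fun k => P k k) (fun _ _ => hP.diag_nonneg) (Finset.mem_univ i)

theorem krausMap_sub_apply_sub_le [Fintype m] [DecidableEq n] {F : ι → Matrix m n ℂ}
    (hF : ∑ ℓ, (F ℓ)ᴴ * F ℓ = 1) {P Q : Matrix n n ℂ} (hP : P.PosSemidef) (hQ : Q.PosSemidef)
    (i j : m) :
    krausMap F (P - Q) i i - krausMap F (P - Q) j j ≤ P.trace + Q.trace := by
  rw [krausMap_sub, ← trace_krausMap hF P, ← trace_krausMap hF Q]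
  have hP' := hP.krausMap F
  have hQ' := hQ.krausMap F
  calc (krausMap F P - krausMap F Q) i i - (krausMap F P - krausMap F Q) j j
      = (krausMap F P i i - krausMap F P j j) + (krausMap F Q j j - krausMap F Q i i) := by
        simp only [Matrix.sub_apply]; ring
    _ ≤ krausMap F P i i + krausMap F Q j j :=
        add_le_add (sub_le_self _ hP'.diag_nonneg) (sub_le_self _ hQ'.diag_nonneg)
    _ ≤ (krausMap F P).trace + (krausMap F Q).trace :=
        add_le_add (hP'.apply_le_trace i) (hQ'.apply_le_trace j)

end Kraus

theorem three_mul_sqrt_div_three_lt_sqrt_one_sub_iff (ε : ℝ) :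
    3 * √(ε / 3) < √(1 - ε) ↔ ε < 1 / 4 := by
  rw [show 3 * √(ε / 3) = √(3 * ε) by
    rw [show (3 : ℝ) * ε = 3 ^ 2 * (ε / 3) by ring, Real.sqrt_mul (by norm_num),
      Real.sqrt_sq (by norm_num)]]
  rcases lt_or_ge 0 (1 - ε) with h | h
  · rw [Real.sqrt_lt_sqrt_iff_of_pos h]; constructor <;> intro <;> linarith
  · rw [Real.sqrt_eq_zero'.2 h]
    exact iff_of_false (Real.sqrt_nonneg _).not_gt (by linarith)

theorem two_mul_mul_add_lt_add_mul_sub_iff {α β : ℝ} (hα : 0 ≤ α) (hβ : 0 ≤ β) :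
    2 * β * (α + β) < (α + β) * (α - β) ↔ 3 * β < α := by
  constructor <;> intro h <;> nlinarith

def depolarizingS (α β : ℝ) : Fin 2 → Matrix (Fin 2) (Fin 4) ℂ :=
  ![!![α, β, 0, 0; 0, 0, β, β], !![0, 0, -β, β; α, -β, 0, 0]]

/-- With `γ² = αβ`, `R₀R₀ᴴ - R₁R₁ᴴ = 2αβ σₓ ⊕ 2β² σₓ`; its positive and negative parts are
`AᴴA` and `BᴴB` for `A = jordanFactor γ β 1` and `B = jordanFactor γ β (-1)`. -/
def jordanFactor (γ β s : ℝ) : Matrix (Fin 2) (Fin 4) ℂ :=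
  !![γ, s * γ, 0, 0; 0, 0, β, s * β]

theorem trace_conjTranspose_mul_self_jordanFactor (γ β s : ℝ) :
    ((jordanFactor γ β s)ᴴ * jordanFactor γ β s).trace = (1 + s ^ 2) * (γ ^ 2 + β ^ 2) := by
  simp [jordanFactor, trace, mul_apply, Fin.sum_univ_succ, Complex.conj_ofReal]
  ring

theorem depolarizingS_transpose_sub {α β γ : ℝ} (hγ : γ ^ 2 = α * β) :
    (depolarizingS α β 0)ᵀ * (depolarizingS α β 0)ᵀᴴ
        - (depolarizingS α β 1)ᵀ * (depolarizingS α β 1)ᵀᴴ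
      = (jordanFactor γ β 1)ᴴ * jordanFactor γ β 1
        - (jordanFactor γ β (-1))ᴴ * jordanFactor γ β (-1) := by
  have hγ' : (γ : ℂ) * γ = α * β := by exact_mod_cast (sq γ).symm.trans hγ
  ext i j
  fin_cases i <;> fin_cases j <;>
    simp [depolarizingS, jordanFactor, mul_apply, Fin.sum_univ_succ, Complex.conj_ofReal] <;>
    linear_combination (-2 : ℂ) * hγ'

theorem depolarizingS_sub_apply_zero_sub_apply_one (α β : ℝ) :
    (depolarizingS α β 0 * (depolarizingS α β 0)ᴴ
          - depolarizingS α β 1 * (depolarizingS α β 1)ᴴ) 0 0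
      - (depolarizingS α β 0 * (depolarizingS α β 0)ᴴ
          - depolarizingS α β 1 * (depolarizingS α β 1)ᴴ) 1 1
      = 2 * (α ^ 2 - β ^ 2) := by
  simp [depolarizingS, vecMul, dotProduct, Fin.sum_univ_succ, Complex.conj_ofReal]
  ring

theorem depolarizing_no_channel_general (ε α β : ℝ)
    (hα : α = Real.sqrt (1 - ε)) (hβ : β = Real.sqrt (ε / 3))
    (S : Fin 2 → Matrix (Fin 2) (Fin 4) ℂ)
    (hS0 : S 0 = !![(α : ℂ), (β : ℂ), 0, 0; 0, 0, (β : ℂ), (β : ℂ)])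
    (hS1 : S 1 = !![0, 0, -(β : ℂ), (β : ℂ); (α : ℂ), -(β : ℂ), 0, 0])
    (R : Fin 2 → Matrix (Fin 4) (Fin 2) ℂ)
    (hR : ∀ u, R u = (S u)ᵀ) :
    (2 * β * (α + β) < (α + β) * (α - β) ↔ ε < 1 / 4) ∧
    (ε < 1 / 4 →
      ¬ ∃ (r : ℕ) (F : Fin r → Matrix (Fin 2) (Fin 4) ℂ),
          (∑ ℓ, (F ℓ)ᴴ * F ℓ = 1) ∧
          ∀ u v : Fin 2, ∑ ℓ, F ℓ * (R u * (R v)ᴴ) * (F ℓ)ᴴ = S u * (S v)ᴴ) := by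
  have hα0 : 0 ≤ α := hα ▸ Real.sqrt_nonneg _
  have hβ0 : 0 ≤ β := hβ ▸ Real.sqrt_nonneg _
  have h3β : 3 * β < α ↔ ε < 1 / 4 :=
    hα ▸ hβ ▸ three_mul_sqrt_div_three_lt_sqrt_one_sub_iff ε
  refine ⟨(two_mul_mul_add_lt_add_mul_sub_iff hα0 hβ0).trans h3β, ?_⟩
  rintro hε ⟨r, F, hF, hFRS⟩
  obtain rfl : S = depolarizingS α β := funext fun u => by fin_cases u <;> assumption
  obtain rfl : R = fun u => (depolarizingS α β u)ᵀ := funext hR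
  obtain ⟨γ, hγ⟩ : ∃ γ : ℝ, γ ^ 2 = α * β :=
    ⟨_, Real.sq_sqrt (mul_nonneg hα0 hβ0)⟩
  have hbound := krausMap_sub_apply_sub_le hF
    (posSemidef_conjTranspose_mul_self (jordanFactor γ β 1))
    (posSemidef_conjTranspose_mul_self (jordanFactor γ β (-1))) 0 1
  rw [← depolarizingS_transpose_sub hγ, krausMap_sub, krausMap, krausMap, hFRS, hFRS,
    depolarizingS_sub_apply_zero_sub_apply_one, trace_conjTranspose_mul_self_jordanFactor,
    trace_conjTranspose_mul_self_jordanFactor] at hbound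
  have hbound' : 2 * (α ^ 2 - β ^ 2)
      ≤ (1 + 1 ^ 2) * (γ ^ 2 + β ^ 2) + (1 + (-1) ^ 2) * (γ ^ 2 + β ^ 2) := by
    exact_mod_cast hbound
  nlinarith [h3β.2 hε]

/-- with `α = √(1−ε)`, `β = √(ε/3)`, `α > β > 0`, the inequality
`2β(α+β) < (α+β)(α−β)` holds iff `ε < 1/4`; consequently, for `ε < 1/4` there is no TPCP
map `F` with `F(R_u R_vᴴ) = S_u S_vᴴ` for all `u, v ∈ {0,1}` (the depolarizing-channel
matrices). -/
theorem depolarizing_no_channel (ε α β : ℝ)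
    (hε0 : 0 < ε) (hε1 : ε < 3 / 4)
    (hα : α = Real.sqrt (1 - ε)) (hβ : β = Real.sqrt (ε / 3))
    (S : Fin 2 → Matrix (Fin 2) (Fin 4) ℂ)
    (hS0 : S 0 = !![(α : ℂ), (β : ℂ), 0, 0; 0, 0, (β : ℂ), (β : ℂ)])
    (hS1 : S 1 = !![0, 0, -(β : ℂ), (β : ℂ); (α : ℂ), -(β : ℂ), 0, 0])
    (R : Fin 2 → Matrix (Fin 4) (Fin 2) ℂ)
    (hR : ∀ u, R u = (S u)ᵀ) :
    (2 * β * (α + β) < (α + β) * (α - β) ↔ ε < 1 / 4) ∧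
    (ε < 1 / 4 →
      ¬ ∃ (r : ℕ) (F : Fin r → Matrix (Fin 2) (Fin 4) ℂ),
          (∑ ℓ, (F ℓ)ᴴ * F ℓ = 1) ∧
          ∀ u v : Fin 2, ∑ ℓ, F ℓ * (R u * (R v)ᴴ) * (F ℓ)ᴴ = S u * (S v)ᴴ) :=
  depolarizing_no_channel_general ε α β hα hβ S hS0 hS1 R hR
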